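/- arXiv:2505.09634 — 2 statements merged into one kernel-verified Lean document; each statement's English description precedes it below -/
import Mathlib

section
/- For any real numbers t1, t2, t3, t4, t5, t6, t7 satisfying 1/17.41 ≤ t1 < t2 < t3 < t4 < t5 < t6 < t7 and t1 + t2 + t3 + t4 + t5 + t6 + t7 = 1, there exists a subset I of {1,2,3,4,5,6,7} such that 0.611797 ≤ ∑_{i ∈ I} t_i ≤ 0.787393. -/
theorem stmt_0 (t : Fin 7 → ℝ)
    (h1 : 1 / 17.41 ≤ t 0)
    (hmono : StrictMono t)
    (hsum : t 0 + t 1 + t 2 + t 3 + t 4 + t 5 + t 6 = 1) :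
    ∃ I : Finset (Fin 7), 0.611797 ≤ ∑ i ∈ I, t i ∧ ∑ i ∈ I, t i ≤ 0.787393 := by
  have h01 : t 0 < t 1 := hmono (by decide)
  have h12 : t 1 < t 2 := hmono (by decide)
  have h23 : t 2 < t 3 := hmono (by decide)
  have h34 : t 3 < t 4 := hmono (by decide)
  have h45 : t 4 < t 5 := hmono (by decide)
  have h56 : t 5 < t 6 := hmono (by decide)
  by_cases hA : 0.212607 ≤ t 0 + t 1
  · refine ⟨{2,3,4,5,6}, ?_, ?_⟩ <;>
    · simp [Finset.sum_insert, Finset.mem_insert,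
        Finset.sum_singleton]
      linarith
  by_cases hB : 0.212607 ≤ t 0 + t 1 + t 2
  · refine ⟨{3,4,5,6}, ?_, ?_⟩ <;>
    · simp [Finset.sum_insert, Finset.mem_insert,
        Finset.sum_singleton]
      linarith
  by_cases hC : t 0 + t 1 + t 2 + t 3 ≤ 0.388203
  · refine ⟨{4,5,6}, ?_, ?_⟩ <;>
    · simp [Finset.sum_insert, Finset.mem_insert,
        Finset.sum_singleton]
      linarith
  · refine ⟨{1,2,4,5,6}, ?_, ?_⟩ <;>
    · simp [Finset.sum_insert, Finset.mem_insert,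
        Finset.sum_singleton]
      linarith
end

section
/- For any real numbers t1, t2, t3, t4, t5, t6 satisfying 1/17.41 ≤ t1 < t2 < t3 < t4 < t5 < t6 and t1 + t2 + t3 + t4 + t5 + t6 = 1, there exists a subset I of {1,2,3,4,5,6} such that 0.611797 ≤ ∑_{i ∈ I} t_i ≤ 0.787393. -/
theorem stmt_1 (t : Fin 6 → ℝ)
    (h1 : 1 / 17.41 ≤ t 0)
    (hmono : StrictMono t)
    (hsum : t 0 + t 1 + t 2 + t 3 + t 4 + t 5 = 1) :
    ∃ I : Finset (Fin 6), 0.611797 ≤ ∑ i ∈ I, t i ∧ ∑ i ∈ I, t i ≤ 0.787393 := by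
  have ha : (0.057438 : ℝ) ≤ t 0 := le_trans (by norm_num) h1
  have m01 : t 0 < t 1 := hmono (by decide : (0:Fin 6) < 1)
  have m12 : t 1 < t 2 := hmono (by decide : (1:Fin 6) < 2)
  have m23 : t 2 < t 3 := hmono (by decide : (2:Fin 6) < 3)
  have m34 : t 3 < t 4 := hmono (by decide : (3:Fin 6) < 4)
  have m45 : t 4 < t 5 := hmono (by decide : (4:Fin 6) < 5)
  rcases le_or_gt 0.212607 (t 0 + t 1) with H1 | H1
  · refine ⟨{2,3,4,5}, ?_, ?_⟩ <;>
    · rw [show ∑ i ∈ ({2,3,4,5} : Finset (Fin 6)), t i = t 2 + t 3 + t 4 + t 5 by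
        simp [Finset.sum_insert, Finset.mem_insert]; ring]
      linarith
  · rcases le_or_gt (t 0 + t 1 + t 2) 0.388203 with H2 | H2
    · rcases le_or_gt 0.212607 (t 0 + t 1 + t 2) with H3 | H3
      · refine ⟨{3,4,5}, ?_, ?_⟩ <;>
        · rw [show ∑ i ∈ ({3,4,5} : Finset (Fin 6)), t i = t 3 + t 4 + t 5 by
            simp [Finset.sum_insert, Finset.mem_insert]; ring]
          linarith
      · rcases le_or_gt (t 0 + t 1 + t 2 + t 3) 0.388203 with H4 | H4
        · refine ⟨{4,5}, ?_, ?_⟩ <;>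
          · rw [show ∑ i ∈ ({4,5} : Finset (Fin 6)), t i = t 4 + t 5 by
              simp [Finset.sum_insert, Finset.mem_insert]]
            linarith
        · refine ⟨{1,2,4,5}, ?_, ?_⟩ <;>
          · rw [show ∑ i ∈ ({1,2,4,5} : Finset (Fin 6)), t i = t 1 + t 2 + t 4 + t 5 by
              simp [Finset.sum_insert, Finset.mem_insert]; ring]
            linarith
    · refine ⟨{1,3,4,5}, ?_, ?_⟩ <;>
      · rw [show ∑ i ∈ ({1,3,4,5} : Finset (Fin 6)), t i = t 1 + t 3 + t 4 + t 5 by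
          simp [Finset.sum_insert, Finset.mem_insert]; ring]
        linarith
end
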